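/- arXiv:2309.15654 — 5 statements merged into one kernel-verified Lean document; each statement's English description precedes it below -/
import Mathlib

section
/- Let τ be a finite relational signature and let Γ and Δ be valued τ-structures with domains C and D respectively such that there exists a fractional homomorphism ω from Δ to Γ. Then for every τ-expression φ(x_1,…,x_n), the cost of φ with respect to Γ is at most the cost of φ with respect to Δ, i.e. inf_{b ∈ C^n} φ^Γ(b) ≤ inf_{a ∈ D^n} φ^Δ(a). -/
open MeasureTheory
open scoped ENNReal NNReal

/-- The value space `ℚ ∪ {∞}`. -/
abbrev QInf : Type := WithTop ℚ

/-- The embedding of `ℚ ∪ {∞}` into the extended reals. -/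
noncomputable def QInf.toE (x : QInf) : EReal :=
  WithTop.recTopCoe ⊤ (fun q : ℚ => ((q : ℝ) : EReal)) x

/-- A relational signature: a collection of relation symbols with arities. -/
structure Signature where
  symbols : Type
  arity : symbols → ℕ

/-- A valued `τ`-structure with domain `C`: each symbol is interpreted as a valued relation. -/
def VStruct (τ : Signature) (C : Type) : Type :=
  ∀ s : τ.symbols, (Fin (τ.arity s) → C) → QInf

/-- An atom `R(x_{i_1},…,x_{i_k})` with variables from `V`. -/
structure SAtom (τ : Signature) (V : Type) where
  sym : τ.symbols
  vars : Fin (τ.arity sym) → V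

/-- A `τ`-expression: a finite formal sum of atoms. -/
def Expr (τ : Signature) (V : Type) : Type := List (SAtom τ V)

/-- Evaluation of a `τ`-expression in a valued structure. -/
def Expr.eval {τ : Signature} {C V : Type} (Γ : VStruct τ C) (φ : Expr τ V)
    (a : V → C) : QInf :=
  (φ.map fun t => Γ t.sym fun i => a (t.vars i)).sum

/-- The product topology on `D → C` where `C` carries the discrete topology. -/
def fnTop (D C : Type) : TopologicalSpace (D → C) :=
  @Pi.topologicalSpace D (fun _ => C) (fun _ => ⊥)

/-- The Borel σ-algebra on `D → C` for the product of discrete topologies. -/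
noncomputable def fnBorel (D C : Type) : MeasurableSpace (D → C) :=
  @borel (D → C) (fnTop D C)

/-- A fractional map from `D` to `C`: a Borel probability measure on `C^D`. -/
def IsFracMap {D C : Type} (ω : @Measure (D → C) (fnBorel D C)) : Prop :=
  @IsProbabilityMeasure (D → C) (fnBorel D C) ω

/-- The positive part of an extended real, as an extended nonnegative real. -/
noncomputable def erealPos (x : EReal) : ℝ≥0∞ :=
  if x = ⊤ then ⊤ else ENNReal.ofReal x.toReal

/-- The `EReal`-valued Lebesgue integral: integral of the positive part minus
integral of the negative part. -/
noncomputable def ERInt {D C : Type} (ω : @Measure (D → C) (fnBorel D C))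
    (X : (D → C) → EReal) : EReal :=
  ((@MeasureTheory.lintegral (D → C) (fnBorel D C) ω fun f => erealPos (X f) : ℝ≥0∞) : EReal)
    - ((@MeasureTheory.lintegral (D → C) (fnBorel D C) ω fun f => erealPos (-X f) : ℝ≥0∞) : EReal)

/-- Existence of the `EReal`-valued Lebesgue integral: the integrand is Borel measurable and
not both the positive and the negative part have infinite integral. -/
def EIntEx {D C : Type} (ω : @Measure (D → C) (fnBorel D C)) (X : (D → C) → EReal) : Prop :=
  (@Measurable (D → C) EReal (fnBorel D C) inferInstance X) ∧
    ((@MeasureTheory.lintegral (D → C) (fnBorel D C) ω fun f => erealPos (X f)) ≠ ⊤ ∨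
      (@MeasureTheory.lintegral (D → C) (fnBorel D C) ω fun f => erealPos (-X f)) ≠ ⊤)

/-- A fractional homomorphism from `Δ` to `Γ`. -/
def IsFracHom {τ : Signature} {D C : Type} (Δ : VStruct τ D) (Γ : VStruct τ C)
    (ω : @Measure (D → C) (fnBorel D C)) : Prop :=
  IsFracMap ω ∧
    ∀ (s : τ.symbols) (a : Fin (τ.arity s) → D),
      EIntEx ω (fun f => QInf.toE (Γ s (f ∘ a))) ∧
        ERInt ω (fun f => QInf.toE (Γ s (f ∘ a))) ≤ QInf.toE (Δ s a)

/-- An automorphism of a valued structure. -/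
def IsVAuto {τ : Signature} {C : Type} (Γ : VStruct τ C) (α : Equiv.Perm C) : Prop :=
  ∀ (s : τ.symbols) (a : Fin (τ.arity s) → C), Γ s (fun i => α (a i)) = Γ s a

/-- The automorphism group of a valued structure is oligomorphic: for each `k` there are
finitely many orbits of `k`-tuples. -/
def VOligo {τ : Signature} {C : Type} (Γ : VStruct τ C) : Prop :=
  ∀ k : ℕ, ∃ F : Set (Fin k → C), F.Finite ∧
    ∀ a : Fin k → C, ∃ b ∈ F, ∃ α : Equiv.Perm C,
      IsVAuto Γ α ∧ (fun i => α (b i)) = a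

/-!
Fix `a : D^n`. Every `f : D → C` gives the candidate `f ∘ a` for the infimum over `C^n`, so
the cost of `φ` in `Γ` is a lower bound of `f ↦ φ^Γ(f ∘ a)` and hence, `ω` being a probability
measure, of its expectation. That expectation is the sum of the expectations of the atoms of `φ`:
the integrands never take the value `-∞`, and, unless `φ^Δ(a) = ∞`, each atom has an expectation
below its finite value in `Δ`, so its positive part has finite integral. Summing the atomwise
bounds gives `φ^Δ(a)`.
-/

namespace EReal

lemma coe_toENNReal_sub_coe_toENNReal_neg (x : EReal) :
    (x.toENNReal : EReal) - (-x).toENNReal = x := by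
  induction x with
  | bot => simp
  | coe r =>
    rw [← coe_neg, real_coe_toENNReal, real_coe_toENNReal, coe_ennreal_ofReal,
      coe_ennreal_ofReal, ← coe_sub, max_zero_sub_eq_self]
  | top => simp

lemma coe_finset_sum {ι : Type*} (s : Finset ι) (g : ι → ℝ) :
    ((∑ i ∈ s, g i : ℝ) : EReal) = ∑ i ∈ s, (g i : EReal) :=
  map_sum (⟨⟨(↑), coe_zero⟩, coe_add⟩ : ℝ →+ EReal) g s

lemma sum_eq_top_of_mem {ι : Type*} {s : Finset ι} {x : ι → EReal} (hbot : ∀ i ∈ s, x i ≠ ⊥)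
    {j : ι} (hj : j ∈ s) (htop : x j = ⊤) : ∑ i ∈ s, x i = ⊤ := by
  classical
  rw [← Finset.add_sum_erase _ _ hj, htop]
  refine top_add_of_ne_bot fun h => ?_
  obtain ⟨i, hi, hxi⟩ := (WithBot.sum_eq_bot_iff (M := WithTop ℝ)).mp h
  exact hbot i (Finset.mem_of_mem_erase hi) hxi

lemma toENNReal_sum_add_sum_toENNReal_neg {ι : Type*} (s : Finset ι) (x : ι → EReal)
    (hbot : ∀ i ∈ s, x i ≠ ⊥) :
    (∑ i ∈ s, x i).toENNReal + ∑ i ∈ s, (-x i).toENNReal =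
      (-∑ i ∈ s, x i).toENNReal + ∑ i ∈ s, (x i).toENNReal := by
  by_cases htop : ∃ j ∈ s, x j = ⊤
  · obtain ⟨j, hj, hxj⟩ := htop
    have hpos : ∑ i ∈ s, (x i).toENNReal = ⊤ := ENNReal.sum_eq_top.mpr ⟨j, hj, by simp [hxj]⟩
    simp [sum_eq_top_of_mem hbot hj hxj, hpos]
  push Not at htop
  set g : ι → ℝ := fun i => (x i).toReal
  have hx : ∀ i ∈ s, x i = g i := fun i hi => (coe_toReal (htop i hi) (hbot i hi)).symm
  have hpos : ∀ i ∈ s, (x i).toENNReal = ENNReal.ofReal (g i) := fun i hi => by rw [hx i hi]; rfl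
  have hneg : ∀ i ∈ s, (-x i).toENNReal = ENNReal.ofReal (-g i) := fun i hi => by
    rw [hx i hi, ← coe_neg]; rfl
  have hfin : ∀ y : ι → ℝ, ∑ i ∈ s, ENNReal.ofReal (y i) ≠ ∞ := fun _ =>
    ENNReal.sum_ne_top.mpr fun _ _ => ENNReal.ofReal_ne_top
  rw [Finset.sum_congr rfl hx, ← coe_finset_sum, ← coe_neg, real_coe_toENNReal,
    real_coe_toENNReal,
    Finset.sum_congr rfl hpos, Finset.sum_congr rfl hneg,
    ← ENNReal.toReal_eq_toReal_iff' (ENNReal.add_ne_top.mpr ⟨ENNReal.ofReal_ne_top, hfin _⟩)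
      (ENNReal.add_ne_top.mpr ⟨ENNReal.ofReal_ne_top, hfin _⟩),
    ENNReal.toReal_add ENNReal.ofReal_ne_top (hfin _),
    ENNReal.toReal_add ENNReal.ofReal_ne_top (hfin _),
    ENNReal.toReal_sum (fun _ _ => ENNReal.ofReal_ne_top),
    ENNReal.toReal_sum (fun _ _ => ENNReal.ofReal_ne_top)]
  simp only [ENNReal.toReal_ofReal']
  have hsplit : ∀ t : ℝ, max t 0 = t + max (-t) 0 := fun t => by
    linarith [max_zero_sub_eq_self t]
  rw [hsplit, Finset.sum_congr rfl fun i _ => hsplit (g i), Finset.sum_add_distrib]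
  ring

/-- No finiteness is needed: with the convention `⊥ + ⊤ = ⊥`, both sides are `⊥` as soon as
some `b i` is infinite. -/
lemma sum_coe_ennreal_sub {ι : Type*} (s : Finset ι) (a b : ι → ℝ≥0∞) :
    ∑ i ∈ s, ((a i : EReal) - b i) =
      ((∑ i ∈ s, a i : ℝ≥0∞) : EReal) - (∑ i ∈ s, b i : ℝ≥0∞) := by
  classical
  induction s using Finset.induction_on with
  | empty => simp
  | insert j s hj ih =>
    rw [Finset.sum_insert hj, Finset.sum_insert hj, Finset.sum_insert hj, ih, coe_ennreal_add,
      coe_ennreal_add, add_sub_add_comm (.inl (coe_ennreal_ne_bot _)) (.inr (coe_ennreal_ne_bot _))]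

lemma coe_ennreal_sub_eq_of_add_eq {a b c d : ℝ≥0∞} (ha : a ≠ ∞) (hc : c ≠ ∞)
    (h : a + d = b + c) : (a : EReal) - b = c - d := by
  by_cases hd : d = ∞
  · have hb : b = ∞ := by simpa [hd, hc] using h.symm
    simp [hb, hd]
  have hb : b ≠ ∞ := fun hb => by simp [hb, ha, hd] at h
  lift a to ℝ≥0 using ha
  lift b to ℝ≥0 using hb
  lift c to ℝ≥0 using hc
  lift d to ℝ≥0 using hd
  have h' : (a : ℝ) - b = c - d := by
    have : (a : ℝ) + d = b + c := by exact_mod_cast h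
    linarith
  simp only [coe_nnreal_eq_coe_real, ← coe_sub, h']

end EReal

section ERealIntegral

variable {α : Type*} [MeasurableSpace α] (μ : Measure α)

/-- `ERInt` over an arbitrary measure space: `erealPos` unfolds to `EReal.toENNReal`, so
`ERInt ω X` is definitionally `erealIntegral ω X`. -/
noncomputable def erealIntegral (X : α → EReal) : EReal :=
  (∫⁻ a, (X a).toENNReal ∂μ : ℝ≥0∞) - (∫⁻ a, (-X a).toENNReal ∂μ : ℝ≥0∞)

lemma le_erealIntegral_of_forall_le [IsProbabilityMeasure μ] {X : α → EReal} {m : EReal}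
    (h : ∀ a, m ≤ X a) : m ≤ erealIntegral μ X := by
  rw [← EReal.coe_toENNReal_sub_coe_toENNReal_neg m]
  refine EReal.sub_le_sub (EReal.coe_ennreal_le_coe_ennreal_iff.mpr ?_)
    (EReal.coe_ennreal_le_coe_ennreal_iff.mpr ?_)
  · calc m.toENNReal = ∫⁻ _, m.toENNReal ∂μ := by simp
      _ ≤ ∫⁻ a, (X a).toENNReal ∂μ := lintegral_mono fun a => EReal.toENNReal_le_toENNReal (h a)
  · calc ∫⁻ a, (-X a).toENNReal ∂μ ≤ ∫⁻ _, (-m).toENNReal ∂μ :=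
          lintegral_mono fun a => EReal.toENNReal_le_toENNReal (EReal.neg_le_neg_iff.mpr (h a))
      _ = (-m).toENNReal := by simp

variable {μ}

lemma lintegral_toENNReal_ne_top_of_erealIntegral_ne_top {X : α → EReal}
    (hex : ∫⁻ a, (X a).toENNReal ∂μ ≠ ∞ ∨ ∫⁻ a, (-X a).toENNReal ∂μ ≠ ∞)
    (hX : erealIntegral μ X ≠ ⊤) : ∫⁻ a, (X a).toENNReal ∂μ ≠ ∞ := by
  intro hpos
  refine hX ?_
  rw [erealIntegral, hpos, EReal.coe_ennreal_top]
  exact EReal.top_sub (by simpa using hex.resolve_left (not_not.mpr hpos))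

lemma erealIntegral_finset_sum {ι : Type*} {s : Finset ι} {X : ι → α → EReal}
    (hX : ∀ i ∈ s, Measurable (X i)) (hbot : ∀ i ∈ s, ∀ a, X i a ≠ ⊥)
    (hpos : ∀ i ∈ s, ∫⁻ a, (X i a).toENNReal ∂μ ≠ ∞) :
    erealIntegral μ (fun a => ∑ i ∈ s, X i a) = ∑ i ∈ s, erealIntegral μ (X i) := by
  have hmeas_pos : ∀ i ∈ s, Measurable fun a => (X i a).toENNReal := fun i hi =>
    (hX i hi).ereal_toENNReal
  have hmeas_neg : ∀ i ∈ s, Measurable fun a => (-X i a).toENNReal := fun i hi =>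
    (hX i hi).neg.ereal_toENNReal
  have hsum_pos :
      ∫⁻ a, (∑ i ∈ s, X i a).toENNReal ∂μ ≤ ∑ i ∈ s, ∫⁻ a, (X i a).toENNReal ∂μ := by
    rw [← lintegral_finsetSum _ hmeas_pos]
    exact lintegral_mono fun a => Finset.le_sum_of_subadditive _ EReal.toENNReal_zero.le
      (fun _ _ => EReal.toENNReal_add_le) s _
  have hparts : ∫⁻ a, (∑ i ∈ s, X i a).toENNReal ∂μ + ∑ i ∈ s, ∫⁻ a, (-X i a).toENNReal ∂μ =
      ∫⁻ a, (-∑ i ∈ s, X i a).toENNReal ∂μ + ∑ i ∈ s, ∫⁻ a, (X i a).toENNReal ∂μ := by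
    rw [← lintegral_finsetSum _ hmeas_pos, ← lintegral_finsetSum _ hmeas_neg,
      ← lintegral_add_right _ (Finset.measurable_sum _ hmeas_neg),
      ← lintegral_add_right _ (Finset.measurable_sum _ hmeas_pos)]
    exact lintegral_congr fun a =>
      EReal.toENNReal_sum_add_sum_toENNReal_neg s _ fun i hi => hbot i hi a
  have hfin : ∑ i ∈ s, ∫⁻ a, (X i a).toENNReal ∂μ ≠ ∞ := ENNReal.sum_ne_top.mpr hpos
  rw [erealIntegral, EReal.coe_ennreal_sub_eq_of_add_eq (ne_top_of_le_ne_top hfin hsum_pos) hfin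
    hparts, ← EReal.sum_coe_ennreal_sub]
  rfl

end ERealIntegral

namespace QInf

lemma toE_ne_bot (x : QInf) : x.toE ≠ ⊥ := by
  induction x using WithTop.recTopCoe <;> simp [toE]

lemma toE_lt_top {x : QInf} (hx : x ≠ ⊤) : x.toE < ⊤ := by
  lift x to ℚ using hx
  simp [toE]

lemma toE_add (x y : QInf) : (x + y).toE = x.toE + y.toE := by
  induction x using WithTop.recTopCoe with
  | top => exact (EReal.top_add_of_ne_bot (toE_ne_bot y)).symm
  | coe q =>
    induction y using WithTop.recTopCoe with
    | top => simp [toE, EReal.add_top_of_ne_bot]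
    | coe r => simp [toE, ← WithTop.coe_add]

lemma toE_sum {ι : Type*} (s : Finset ι) (x : ι → QInf) :
    (∑ i ∈ s, x i).toE = ∑ i ∈ s, (x i).toE :=
  map_sum (⟨⟨toE, show (((0 : ℚ) : ℝ) : EReal) = 0 by simp⟩, toE_add⟩ : QInf →+ EReal) x s

end QInf

lemma Expr.eval_eq_sum {τ : Signature} {C V : Type} (Γ : VStruct τ C) (φ : Expr τ V)
    (a : V → C) :
    Expr.eval Γ φ a =
      ∑ i : Fin (List.length φ), Γ (List.get φ i).sym (a ∘ (List.get φ i).vars) :=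
  (Fin.sum_univ_fun_getElem φ fun t => Γ t.sym (a ∘ t.vars)).symm

lemma IsFracHom.erealIntegral_eval_le {τ : Signature} {C D V : Type} {Γ : VStruct τ C}
    {Δ : VStruct τ D} {ω : @Measure (D → C) (fnBorel D C)} (hω : IsFracHom Δ Γ ω)
    (φ : Expr τ V) (a : V → D) :
    @erealIntegral _ (fnBorel D C) ω (fun f => (Expr.eval Γ φ (f ∘ a)).toE) ≤
      (Expr.eval Δ φ a).toE := by
  let := fnBorel D C
  by_cases hΔ : Expr.eval Δ φ a = ⊤
  · simp [hΔ, QInf.toE]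
  let X : Fin (List.length φ) → (D → C) → EReal := fun i f =>
    (Γ (List.get φ i).sym (f ∘ a ∘ (List.get φ i).vars)).toE
  have hatom : ∀ i,
      erealIntegral ω (X i) ≤ (Δ (List.get φ i).sym (a ∘ (List.get φ i).vars)).toE :=
    fun i => (hω.2 _ _).2
  have hpos : ∀ i, ∫⁻ f, (X i f).toENNReal ∂ω ≠ ∞ := by
    intro i
    refine lintegral_toENNReal_ne_top_of_erealIntegral_ne_top (hω.2 _ _).1.2
      ((hatom i).trans_lt (QInf.toE_lt_top ?_)).ne
    rw [Expr.eval_eq_sum, WithTop.sum_eq_top] at hΔ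
    exact fun h => hΔ ⟨i, Finset.mem_univ i, h⟩
  simp only [Expr.eval_eq_sum, QInf.toE_sum]
  calc erealIntegral ω (fun f => ∑ i, X i f)
      = ∑ i, erealIntegral ω (X i) := erealIntegral_finset_sum (fun i _ => (hω.2 _ _).1.1)
        (fun i _ f => QInf.toE_ne_bot _) (fun i _ => hpos i)
    _ ≤ _ := Finset.sum_le_sum fun i _ => hatom i

theorem frac_hom_cost_le_general {τ : Signature} {C D : Type}
    (Γ : VStruct τ C) (Δ : VStruct τ D)
    (ω : @Measure (D → C) (fnBorel D C)) (hω : IsFracHom Δ Γ ω)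
    {n : ℕ} (φ : Expr τ (Fin n)) :
    (⨅ b : Fin n → C, QInf.toE (Expr.eval Γ φ b)) ≤
      ⨅ a : Fin n → D, QInf.toE (Expr.eval Δ φ a) := by
  let := fnBorel D C
  have : IsProbabilityMeasure ω := hω.1
  refine le_iInf fun a => ?_
  calc ⨅ b, (Expr.eval Γ φ b).toE
      ≤ erealIntegral ω (fun f => (Expr.eval Γ φ (f ∘ a)).toE) :=
        le_erealIntegral_of_forall_le ω fun f => iInf_le _ (f ∘ a)
    _ ≤ (Expr.eval Δ φ a).toE := hω.erealIntegral_eval_le φ a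

/-- Proposition on fractional homomorphisms:
if there is a fractional homomorphism `ω` from `Δ` to `Γ`, then for every `τ`-expression
`φ(x_1,…,x_n)` the cost of `φ` with respect to `Γ` is at most the cost of `φ` with
respect to `Δ`. -/
theorem frac_hom_cost_le {τ : Signature} [Finite τ.symbols] {C D : Type}
    (Γ : VStruct τ C) (Δ : VStruct τ D)
    (ω : @Measure (D → C) (fnBorel D C)) (hω : IsFracHom Δ Γ ω)
    {n : ℕ} (φ : Expr τ (Fin n)) :
    (⨅ b : Fin n → C, QInf.toE (Expr.eval Γ φ b)) ≤
      ⨅ a : Fin n → D, QInf.toE (Expr.eval Δ φ a) :=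
  frac_hom_cost_le_general Γ Δ ω hω φ
end

section
/- Let Γ and Δ be valued τ-structures with finite domains that are fractionally homomorphically equivalent. Then: (1) if Γ has a cyclic fractional polymorphism of arity ℓ, then Δ has a cyclic fractional polymorphism of arity ℓ; and (2) if Sup(fPol(Γ)) contains a cyclic operation of arity ℓ, then Sup(fPol(Δ)) contains a cyclic operation of arity ℓ. -/
/-!
If `ω` is a fractional polymorphism of `Γ` and `ν₂ : Δ → Γ`, `ν₁ : Γ → Δ` are fractional
homomorphisms, draw `f ∼ ω`, `g ∼ ν₂`, `g' ∼ ν₁` independently: the law of the operation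
`x ↦ g' (f (g ∘ x))` on `D` is a fractional polymorphism of `Δ`, since its expected cost on a
tuple is bounded by passing through `ν₁`, then `ω`, then `ν₂`. Precomposing and postcomposing a
cyclic operation with unary maps keeps it cyclic, and every cyclic `f` in the support of `ω`
yields such a composite in the support of the new fractional polymorphism.
-/

open scoped ENNReal NNReal

/-- A probability distribution on a finite type, given by its weight function. -/
def FinDist {β : Type} [Fintype β] (w : β → ℝ≥0) : Prop :=
  ∑ f : β, w f = 1

/-- Over a finite domain, a fractional operation (given by its weight function `w`)
improves a `k`-ary valued relation `R`:
`Σ_f w(f)·R(f(a^1,…,a^ℓ)) ≤ (1/ℓ)·Σ_j R(a^j)` for all `a^1,…,a^ℓ ∈ C^k`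
(where `0·∞ = 0`, computed in the extended reals). -/
def FinImproves {C : Type} [Fintype C] [DecidableEq C] {ℓ k : ℕ}
    (w : ((Fin ℓ → C) → C) → ℝ≥0) (R : (Fin k → C) → QInf) : Prop :=
  ∀ a : Fin ℓ → Fin k → C,
    (∑ f : (Fin ℓ → C) → C,
        (((w f : ℝ)) : EReal) * QInf.toE (R fun i => f fun j => a j i)) ≤
      (((ℓ : ℝ)⁻¹ : ℝ) : EReal) * ∑ j : Fin ℓ, QInf.toE (R (a j))

/-- A fractional polymorphism of a valued structure over a finite domain: a probability
distribution on the `ℓ`-ary operations improving every valued relation of `Γ`. -/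
def FinFracPol {τ : Signature} {C : Type} [Fintype C] [DecidableEq C]
    (Γ : VStruct τ C) {ℓ : ℕ} (w : ((Fin ℓ → C) → C) → ℝ≥0) : Prop :=
  FinDist w ∧ ∀ s : τ.symbols, FinImproves w (Γ s)

/-- A fractional homomorphism from `Δ` (domain `D`) to `Γ` (domain `C`) over finite
domains: a probability distribution `ν` on the maps `D → C` with
`Σ_g ν(g)·R^Γ(g(a)) ≤ R^Δ(a)` for every symbol and tuple. -/
def FinFracHom {τ : Signature} {D C : Type} [Fintype D] [DecidableEq D] [Fintype C]
    (Δ : VStruct τ D) (Γ : VStruct τ C) (ν : (D → C) → ℝ≥0) : Prop :=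
  FinDist ν ∧
    ∀ (s : τ.symbols) (a : Fin (τ.arity s) → D),
      (∑ g : D → C, (((ν g : ℝ)) : EReal) * QInf.toE (Γ s (g ∘ a))) ≤
        QInf.toE (Δ s a)

/-- A cyclic operation: `f(x_1,…,x_ℓ) = f(x_2,…,x_ℓ,x_1)`. -/
def IsCyclicOp {C : Type} {ℓ : ℕ} (f : (Fin ℓ → C) → C) : Prop :=
  ∀ x : Fin ℓ → C, f x = f (x ∘ finRotate ℓ)

lemma EReal.coe_nnreal_mul_sum {ι : Type*} (s : Finset ι) (r : ℝ≥0) (v : ι → EReal) :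
    ((r : ℝ) : EReal) * ∑ i ∈ s, v i = ∑ i ∈ s, ((r : ℝ) : EReal) * v i :=
  map_sum ({ toFun := fun y : EReal => ((r : ℝ) : EReal) * y
             map_zero' := mul_zero _
             map_add' := EReal.left_distrib_of_nonneg_of_ne_top (EReal.coe_nonneg.2 r.2)
               (EReal.coe_ne_top r) } : EReal →+ EReal) v s

lemma EReal.coe_nnreal_sum_mul {ι : Type*} (s : Finset ι) (c : ι → ℝ≥0) (x : EReal) :
    (((∑ i ∈ s, c i : ℝ≥0) : ℝ) : EReal) * x = ∑ i ∈ s, ((c i : ℝ) : EReal) * x :=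
  map_sum ({ toFun := fun r : ℝ≥0 => ((r : ℝ) : EReal) * x
             map_zero' := by simp
             map_add' := fun a b => by
               simp only [NNReal.coe_add, EReal.coe_add]
               exact EReal.right_distrib_of_nonneg (EReal.coe_nonneg.2 a.2)
                 (EReal.coe_nonneg.2 b.2) } : ℝ≥0 →+ EReal) c s

section Weights

variable {α β : Type}

noncomputable def weightedSum [Fintype β] (w : β → ℝ≥0) (V : β → EReal) : EReal :=
  ∑ b, ((w b : ℝ) : EReal) * V b

def mapWeight [Fintype α] [DecidableEq β] (Φ : α → β) (w : α → ℝ≥0) (b : β) : ℝ≥0 :=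
  ∑ a with Φ a = b, w a

def prodWeight (w₁ : α → ℝ≥0) (w₂ : β → ℝ≥0) (p : α × β) : ℝ≥0 :=
  w₁ p.1 * w₂ p.2

lemma weightedSum_mono [Fintype β] (w : β → ℝ≥0) {V V' : β → EReal} (h : ∀ b, V b ≤ V' b) :
    weightedSum w V ≤ weightedSum w V' :=
  Finset.sum_le_sum fun b _ => mul_le_mul_of_nonneg_left (h b) (EReal.coe_nonneg.2 (w b).2)

lemma coe_nnreal_mul_weightedSum [Fintype β] (r : ℝ≥0) (w : β → ℝ≥0) (V : β → EReal) :
    ((r : ℝ) : EReal) * weightedSum w V = weightedSum w fun b => (r : ℝ) * V b := by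
  simp only [weightedSum, EReal.coe_nnreal_mul_sum, mul_left_comm ((r : ℝ) : EReal)]

lemma weightedSum_sum [Fintype β] {ι : Type*} (s : Finset ι) (w : β → ℝ≥0)
    (V : β → ι → EReal) :
    weightedSum w (fun b => ∑ i ∈ s, V b i) = ∑ i ∈ s, weightedSum w fun b => V b i := by
  simp only [weightedSum, EReal.coe_nnreal_mul_sum]
  exact Finset.sum_comm

lemma weightedSum_comm [Fintype α] [Fintype β] (w₁ : α → ℝ≥0) (w₂ : β → ℝ≥0)
    (V : α → β → EReal) :
    weightedSum w₁ (fun a => weightedSum w₂ (V a)) =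
      weightedSum w₂ fun b => weightedSum w₁ fun a => V a b := by
  simp only [weightedSum, EReal.coe_nnreal_mul_sum, mul_left_comm ((w₁ _ : ℝ) : EReal)]
  exact Finset.sum_comm

lemma weightedSum_prodWeight [Fintype α] [Fintype β] (w₁ : α → ℝ≥0) (w₂ : β → ℝ≥0)
    (V : α × β → EReal) :
    weightedSum (prodWeight w₁ w₂) V =
      weightedSum w₁ fun a => weightedSum w₂ fun b => V (a, b) := by
  simp only [weightedSum, prodWeight, EReal.coe_nnreal_mul_sum, NNReal.coe_mul,
    EReal.coe_mul, mul_assoc, Fintype.sum_prod_type]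

lemma weightedSum_mapWeight [Fintype α] [Fintype β] [DecidableEq β] (Φ : α → β)
    (w : α → ℝ≥0) (V : β → EReal) :
    weightedSum (mapWeight Φ w) V = weightedSum w (V ∘ Φ) := by
  simp only [weightedSum, mapWeight, EReal.coe_nnreal_sum_mul]
  rw [← Finset.sum_fiberwise Finset.univ Φ]
  refine Finset.sum_congr rfl fun b _ => Finset.sum_congr rfl fun a ha => ?_
  rw [Function.comp_apply, (Finset.mem_filter.1 ha).2]

lemma FinDist.mapWeight [Fintype α] [Fintype β] [DecidableEq β] {w : α → ℝ≥0}
    (hw : FinDist w) (Φ : α → β) : FinDist (mapWeight Φ w) :=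
  (Finset.sum_fiberwise Finset.univ Φ w).trans hw

lemma FinDist.prodWeight [Fintype α] [Fintype β] {w₁ : α → ℝ≥0} {w₂ : β → ℝ≥0}
    (hw₁ : FinDist w₁) (hw₂ : FinDist w₂) : FinDist (prodWeight w₁ w₂) := by
  rw [FinDist] at hw₁ hw₂ ⊢
  simp only [_root_.prodWeight, Fintype.sum_prod_type, ← Finset.mul_sum, hw₂, mul_one, hw₁]

lemma FinDist.exists_ne_zero [Fintype β] {w : β → ℝ≥0} (hw : FinDist w) : ∃ b, w b ≠ 0 := by
  by_contra! h
  simp [FinDist, h] at hw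

lemma exists_of_mapWeight_ne_zero [Fintype α] [DecidableEq β] {Φ : α → β} {w : α → ℝ≥0}
    {b : β} (h : mapWeight Φ w b ≠ 0) : ∃ a, w a ≠ 0 ∧ Φ a = b := by
  obtain ⟨a, ha, hwa⟩ := Finset.exists_ne_zero_of_sum_ne_zero h
  exact ⟨a, hwa, (Finset.mem_filter.1 ha).2⟩

lemma mapWeight_apply_ne_zero [Fintype α] [DecidableEq β] (Φ : α → β) {w : α → ℝ≥0} {a : α}
    (h : w a ≠ 0) : mapWeight Φ w (Φ a) ≠ 0 := by
  have hle : w a ≤ mapWeight Φ w (Φ a) :=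
    Finset.single_le_sum (f := w) (fun _ _ => zero_le) (by simp)
  exact ((pos_iff_ne_zero.2 h).trans_le hle).ne'

end Weights

section Transfer

variable {τ : Signature} {C D : Type} {ℓ : ℕ}

def compOp (g' : C → D) (f : (Fin ℓ → C) → C) (g : D → C) : (Fin ℓ → D) → D :=
  fun x => g' (f (g ∘ x))

lemma IsCyclicOp.compOp {f : (Fin ℓ → C) → C} (hf : IsCyclicOp f) (g' : C → D) (g : D → C) :
    IsCyclicOp (compOp g' f g) :=
  fun x => congrArg g' (hf (g ∘ x))

variable [Fintype C] [DecidableEq C] [Fintype D] [DecidableEq D]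

/-- The law of `compOp g' f g` for independent `f ∼ w`, `g ∼ ν₂` and `g' ∼ ν₁`. -/
def transferWeight (ν₁ : (C → D) → ℝ≥0) (w : ((Fin ℓ → C) → C) → ℝ≥0)
    (ν₂ : (D → C) → ℝ≥0) : ((Fin ℓ → D) → D) → ℝ≥0 :=
  mapWeight (fun t => compOp t.2.2 t.1 t.2.1) (prodWeight w (prodWeight ν₂ ν₁))

lemma transferWeight_compOp_ne_zero {ν₁ : (C → D) → ℝ≥0} {w : ((Fin ℓ → C) → C) → ℝ≥0}
    {ν₂ : (D → C) → ℝ≥0} {g' : C → D} {f : (Fin ℓ → C) → C} {g : D → C} (hg' : ν₁ g' ≠ 0)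
    (hf : w f ≠ 0) (hg : ν₂ g ≠ 0) : transferWeight ν₁ w ν₂ (compOp g' f g) ≠ 0 :=
  mapWeight_apply_ne_zero
    (fun t : ((Fin ℓ → C) → C) × (D → C) × (C → D) => compOp t.2.2 t.1 t.2.1)
    (w := prodWeight w (prodWeight ν₂ ν₁)) (a := (f, g, g'))
    (mul_ne_zero hf (mul_ne_zero hg hg'))

lemma exists_of_transferWeight_ne_zero {ν₁ : (C → D) → ℝ≥0} {w : ((Fin ℓ → C) → C) → ℝ≥0}
    {ν₂ : (D → C) → ℝ≥0} {h : (Fin ℓ → D) → D} (hh : transferWeight ν₁ w ν₂ h ≠ 0) :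
    ∃ g' f g, w f ≠ 0 ∧ compOp g' f g = h := by
  obtain ⟨⟨f, g, g'⟩, hwt, rfl⟩ := exists_of_mapWeight_ne_zero hh
  exact ⟨g', f, g, left_ne_zero_of_mul hwt, rfl⟩

lemma FinFracPol.transfer {Γ : VStruct τ C} {Δ : VStruct τ D} {ν₁ : (C → D) → ℝ≥0}
    {w : ((Fin ℓ → C) → C) → ℝ≥0} {ν₂ : (D → C) → ℝ≥0} (hν₁ : FinFracHom Γ Δ ν₁)
    (hw : FinFracPol Γ w) (hν₂ : FinFracHom Δ Γ ν₂) :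
    FinFracPol Δ (transferWeight ν₁ w ν₂) := by
  refine ⟨(hw.1.prodWeight (hν₂.1.prodWeight hν₁.1)).mapWeight _, fun s a => ?_⟩
  have hinv : (((ℓ : ℝ)⁻¹ : ℝ) : EReal) = (((ℓ⁻¹ : ℝ≥0) : ℝ) : EReal) := by simp
  change weightedSum _ _ ≤ _
  rw [transferWeight, weightedSum_mapWeight, hinv]
  calc _ = weightedSum w fun f => weightedSum ν₂ fun g => weightedSum ν₁ fun g' =>
          QInf.toE (Δ s (g' ∘ fun i => f fun j => g (a j i))) := by
        simp only [weightedSum_prodWeight]; rfl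
    _ ≤ weightedSum w fun f => weightedSum ν₂ fun g =>
          QInf.toE (Γ s fun i => f fun j => g (a j i)) :=
        weightedSum_mono _ fun f => weightedSum_mono _ fun g => hν₁.2 s _
    _ = weightedSum ν₂ fun g => weightedSum w fun f =>
          QInf.toE (Γ s fun i => f fun j => g (a j i)) := weightedSum_comm _ _ _
    _ ≤ weightedSum ν₂ fun g => ((ℓ⁻¹ : ℝ≥0) : ℝ) * ∑ j, QInf.toE (Γ s (g ∘ a j)) :=
        weightedSum_mono _ fun g => hinv ▸ hw.2 s fun j => g ∘ a j
    _ = ((ℓ⁻¹ : ℝ≥0) : ℝ) * ∑ j, weightedSum ν₂ fun g => QInf.toE (Γ s (g ∘ a j)) := by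
        rw [← weightedSum_sum, coe_nnreal_mul_weightedSum]
    _ ≤ _ := mul_le_mul_of_nonneg_left (Finset.sum_le_sum fun j _ => hν₂.2 s (a j))
        (EReal.coe_nonneg.2 (ℓ⁻¹ : ℝ≥0).2)

end Transfer

theorem cyclic_transfers_of_frac_hom_equiv_general {τ : Signature}
    {C D : Type} [Fintype C] [DecidableEq C] [Fintype D] [DecidableEq D]
    (Γ : VStruct τ C) (Δ : VStruct τ D)
    (ν₁ : (C → D) → ℝ≥0) (hν₁ : FinFracHom Γ Δ ν₁)
    (ν₂ : (D → C) → ℝ≥0) (hν₂ : FinFracHom Δ Γ ν₂)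
    (ℓ : ℕ) :
    ((∃ w : ((Fin ℓ → C) → C) → ℝ≥0,
        FinFracPol Γ w ∧ ∀ f, w f ≠ 0 → IsCyclicOp f) →
      ∃ w : ((Fin ℓ → D) → D) → ℝ≥0,
        FinFracPol Δ w ∧ ∀ f, w f ≠ 0 → IsCyclicOp f) ∧
    ((∃ (w : ((Fin ℓ → C) → C) → ℝ≥0) (f : (Fin ℓ → C) → C),
        FinFracPol Γ w ∧ w f ≠ 0 ∧ IsCyclicOp f) →
      ∃ (w : ((Fin ℓ → D) → D) → ℝ≥0) (f : (Fin ℓ → D) → D),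
        FinFracPol Δ w ∧ w f ≠ 0 ∧ IsCyclicOp f) := by
  constructor
  · rintro ⟨w, hw, hcyc⟩
    refine ⟨transferWeight ν₁ w ν₂, hw.transfer hν₁ hν₂, fun h hh => ?_⟩
    obtain ⟨g', f, g, hf, rfl⟩ := exists_of_transferWeight_ne_zero hh
    exact (hcyc f hf).compOp g' g
  · rintro ⟨w, f, hw, hf, hcyc⟩
    obtain ⟨g, hg⟩ := hν₂.1.exists_ne_zero
    obtain ⟨g', hg'⟩ := hν₁.1.exists_ne_zero
    exact ⟨transferWeight ν₁ w ν₂, compOp g' f g, hw.transfer hν₁ hν₂,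
      transferWeight_compOp_ne_zero hg' hf hg, hcyc.compOp g' g⟩

/-- if valued `τ`-structures `Γ` and `Δ` with finite domains are
fractionally homomorphically equivalent, then (1) a cyclic fractional polymorphism of
`Γ` of arity `ℓ` yields a cyclic fractional polymorphism of `Δ` of arity `ℓ`, and
(2) a cyclic operation of arity `ℓ` in `Sup(fPol(Γ))` yields a cyclic operation of
arity `ℓ` in `Sup(fPol(Δ))`. -/
theorem cyclic_transfers_of_frac_hom_equiv {τ : Signature} [Finite τ.symbols]
    {C D : Type} [Fintype C] [DecidableEq C] [Fintype D] [DecidableEq D]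
    (Γ : VStruct τ C) (Δ : VStruct τ D)
    (ν₁ : (C → D) → ℝ≥0) (hν₁ : FinFracHom Γ Δ ν₁)
    (ν₂ : (D → C) → ℝ≥0) (hν₂ : FinFracHom Δ Γ ν₂)
    (ℓ : ℕ) (hℓ : 2 ≤ ℓ) :
    ((∃ w : ((Fin ℓ → C) → C) → ℝ≥0,
        FinFracPol Γ w ∧ ∀ f, w f ≠ 0 → IsCyclicOp f) →
      ∃ w : ((Fin ℓ → D) → D) → ℝ≥0,
        FinFracPol Δ w ∧ ∀ f, w f ≠ 0 → IsCyclicOp f) ∧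
    ((∃ (w : ((Fin ℓ → C) → C) → ℝ≥0) (f : (Fin ℓ → C) → C),
        FinFracPol Γ w ∧ w f ≠ 0 ∧ IsCyclicOp f) →
      ∃ (w : ((Fin ℓ → D) → D) → ℝ≥0) (f : (Fin ℓ → D) → D),
        FinFracPol Δ w ∧ w f ≠ 0 ∧ IsCyclicOp f) :=
  cyclic_transfers_of_frac_hom_equiv_general Γ Δ ν₁ hν₁ ν₂ hν₂ ℓ
end

section
/- Let μ be a union of connected conjunctive queries over a finite relational signature τ such that the Gaifman graph of each conjunctive query in μ is a complete graph. Let A_1 and A_2 be finite τ-structures satisfying ¬μ such that the substructure induced on A_1 ∩ A_2 in A_1 coincides with the substructure induced on A_1 ∩ A_2 in A_2. Then the union structure A_1 ∪ A_2 (with domain A_1 ∪ A_2 and each relation the union of the corresponding relations of A_1 and A_2) satisfies ¬μ. -/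
/-- A (classical) relational `τ`-structure with domain `A`. -/
def Struct (τ : Signature) (A : Type) : Type :=
  ∀ s : τ.symbols, Set (Fin (τ.arity s) → A)

/-- A homomorphism between `τ`-structures. -/
def IsHom {τ : Signature} {A B : Type} (𝔄 : Struct τ A) (𝔅 : Struct τ B)
    (h : A → B) : Prop :=
  ∀ s : τ.symbols, ∀ t ∈ 𝔄 s, (fun i => h (t i)) ∈ 𝔅 s

/-- An embedding between `τ`-structures: an injective map preserving the relations and
their complements. -/
def IsEmbedding {τ : Signature} {A B : Type} (𝔄 : Struct τ A) (𝔅 : Struct τ B)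
    (h : A → B) : Prop :=
  Function.Injective h ∧
    ∀ (s : τ.symbols) (t : Fin (τ.arity s) → A), t ∈ 𝔄 s ↔ (fun i => h (t i)) ∈ 𝔅 s

/-- A conjunctive query over `τ`, given by its canonical database: the number `n` of
variables together with the finite `τ`-structure of its atoms on the variables. -/
def CQ (τ : Signature) : Type := (n : ℕ) × Struct τ (Fin n)

/-- A structure satisfies a conjunctive query iff there is a homomorphism from the
canonical database of the query. -/
def SatCQ {τ : Signature} {A : Type} (𝔄 : Struct τ A) (q : CQ τ) : Prop :=
  ∃ h : Fin q.1 → A, IsHom q.2 𝔄 h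

/-- A structure satisfies a union of conjunctive queries iff it satisfies some disjunct. -/
def SatUCQ {τ : Signature} {A : Type} (𝔄 : Struct τ A) (μ : List (CQ τ)) : Prop :=
  ∃ q ∈ μ, SatCQ 𝔄 q

/-- A `τ`-structure is connected if its domain is nonempty and it is not a disjoint union
of two `τ`-structures with nonempty domains. -/
def Connected {τ : Signature} {A : Type} (𝔄 : Struct τ A) : Prop :=
  Nonempty A ∧
    ∀ S : Set A,
      (∀ s : τ.symbols, ∀ t ∈ 𝔄 s, (∀ i, t i ∈ S) ∨ ∀ i, t i ∉ S) →
      S = ∅ ∨ S = Set.univ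

/-- The Gaifman graph of a structure is complete: any two distinct elements occur together
in some tuple of some relation. -/
def GaifmanComplete {τ : Signature} {A : Type} (𝔄 : Struct τ A) : Prop :=
  ∀ a b : A, a ≠ b → ∃ s : τ.symbols, ∃ t ∈ 𝔄 s, (∃ i, t i = a) ∧ ∃ j, t j = b

/-- An automorphism of a relational structure. -/
def StructAuto {τ : Signature} {A : Type} (𝔄 : Struct τ A) (α : Equiv.Perm A) : Prop :=
  ∀ (s : τ.symbols) (t : Fin (τ.arity s) → A), t ∈ 𝔄 s ↔ (fun i => α (t i)) ∈ 𝔄 s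

/-- A structure is homogeneous if every isomorphism between finite substructures extends
to an automorphism. -/
def Homogeneous {τ : Signature} {B : Type} (𝔅 : Struct τ B) : Prop :=
  ∀ S : Set B, S.Finite → ∀ h : B → B, Set.InjOn h S →
    (∀ (s : τ.symbols) (t : Fin (τ.arity s) → B),
      (∀ i, t i ∈ S) → (t ∈ 𝔅 s ↔ (fun i => h (t i)) ∈ 𝔅 s)) →
    ∃ α : Equiv.Perm B, StructAuto 𝔅 α ∧ ∀ x ∈ S, α x = h x

/-- The substructure of `𝔄` induced on a subset `S` of its domain. -/
def Substruct {τ : Signature} {A : Type} (𝔄 : Struct τ A) (S : Set A) : Struct τ ↥S :=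
  fun s => {t | (fun i => ((t i : ↥S) : A)) ∈ 𝔄 s}

/-- `𝔄` belongs to the age of `𝔅`, i.e. embeds into `𝔅`. -/
def InAge {τ : Signature} {B : Type} (𝔅 : Struct τ B) {A : Type} (𝔄 : Struct τ A) : Prop :=
  ∃ e : A → B, IsEmbedding 𝔄 𝔅 e

/-- A structure `𝔅` is finitely bounded: membership of a finite structure in the age of
`𝔅` is equivalent to all its induced substructures of size at most some fixed bound `l`
belonging to the age (this is equivalent to the age being axiomatised by a universal
first-order sentence, for a finite relational signature). -/
def FinitelyBounded {τ : Signature} {B : Type} (𝔅 : Struct τ B) : Prop :=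
  ∃ l : ℕ, ∀ (A : Type) (_ : Finite A) (𝔄 : Struct τ A),
    InAge 𝔅 𝔄 ↔ ∀ S : Set A, Nat.card S ≤ l → InAge 𝔅 (Substruct 𝔄 S)

/-- The automorphism group of a structure is oligomorphic: finitely many orbits of
`k`-tuples for every `k`. -/
def OligoStruct {τ : Signature} {B : Type} (𝔅 : Struct τ B) : Prop :=
  ∀ k : ℕ, ∃ F : Set (Fin k → B), F.Finite ∧
    ∀ a : Fin k → B, ∃ b ∈ F, ∃ α : Equiv.Perm B,
      StructAuto 𝔅 α ∧ (fun i => α (b i)) = a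

/-- A conjunctive query is satisfied in the substructure of `𝔄` induced on a subset `S`:
there is a homomorphism from its canonical database whose image lies in `S`. -/
def SatCQOn {τ : Signature} {X : Type} (𝔄 : Struct τ X) (S : Set X) (q : CQ τ) : Prop :=
  ∃ h : Fin q.1 → X, (∀ v, h v ∈ S) ∧ IsHom q.2 𝔄 h

/-- A union of conjunctive queries is satisfied in the substructure induced on `S`. -/
def SatUCQOn {τ : Signature} {X : Type} (𝔄 : Struct τ X) (S : Set X)
    (μ : List (CQ τ)) : Prop :=
  ∃ q ∈ μ, SatCQOn 𝔄 S q

/-!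
A homomorphism from a query with complete Gaifman graph into the union of `𝔄₁` and `𝔄₂`
lands entirely in `S₁` or entirely in `S₂`: a variable sent outside `S₁` and one sent
outside `S₂` would share an atom, whose image is a tuple of `𝔄₁` or of `𝔄₂` and so lies
in `S₁` or in `S₂`. As the two structures agree on `S₁ ∩ S₂`, the homomorphism then already
maps into `𝔄₁` (resp. `𝔄₂`), contradicting `¬μ` there.
-/

section FreeAmalgam

variable {τ : Signature} {X A : Type} {S₁ S₂ : Set X} {𝔄₁ 𝔄₂ : Struct τ X}
  {𝔅 : Struct τ A} {h : A → X}

theorem IsHom.of_union_of_forall_mem_left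
    (h₂₁ : ∀ (s : τ.symbols) (t : Fin (τ.arity s) → X), t ∈ 𝔄₂ s → (∀ i, t i ∈ S₁) → t ∈ 𝔄₁ s)
    (hhom : IsHom 𝔅 (fun s => 𝔄₁ s ∪ 𝔄₂ s) h) (hS₁ : ∀ a, h a ∈ S₁) :
    IsHom 𝔅 𝔄₁ h := fun s t ht =>
  (hhom s t ht).elim id fun ht₂ => h₂₁ s _ ht₂ fun i => hS₁ (t i)

theorem GaifmanComplete.forall_mem_or_forall_mem_of_isHom_union (hg : GaifmanComplete 𝔅)
    (hsub₁ : ∀ s : τ.symbols, ∀ t ∈ 𝔄₁ s, ∀ i, t i ∈ S₁)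
    (hsub₂ : ∀ s : τ.symbols, ∀ t ∈ 𝔄₂ s, ∀ i, t i ∈ S₂)
    (hhom : IsHom 𝔅 (fun s => 𝔄₁ s ∪ 𝔄₂ s) h) (hS : ∀ a, h a ∈ S₁ ∪ S₂) :
    (∀ a, h a ∈ S₁) ∨ ∀ a, h a ∈ S₂ := by
  by_contra! ⟨⟨v, hv⟩, ⟨w, hw⟩⟩
  have hvw : v ≠ w := by
    rintro rfl
    exact (hS v).elim hv hw
  obtain ⟨s, t, ht, ⟨i, rfl⟩, ⟨j, rfl⟩⟩ := hg v w hvw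
  rcases hhom s t ht with ht₁ | ht₂
  · exact hv (hsub₁ s _ ht₁ i)
  · exact hw (hsub₂ s _ ht₂ j)

end FreeAmalgam

theorem union_not_sat_general {τ : Signature}
    (μ : List (CQ τ))
    (hgaif : ∀ q ∈ μ, GaifmanComplete q.2)
    {X : Type} (S₁ S₂ : Set X)
    (𝔄₁ 𝔄₂ : Struct τ X)
    (hsub₁ : ∀ s : τ.symbols, ∀ t ∈ 𝔄₁ s, ∀ i, t i ∈ S₁)
    (hsub₂ : ∀ s : τ.symbols, ∀ t ∈ 𝔄₂ s, ∀ i, t i ∈ S₂)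
    (hagree : ∀ (s : τ.symbols) (t : Fin (τ.arity s) → X),
      (∀ i, t i ∈ S₁ ∩ S₂) → (t ∈ 𝔄₁ s ↔ t ∈ 𝔄₂ s))
    (h₁ : ¬ SatUCQOn 𝔄₁ S₁ μ) (h₂ : ¬ SatUCQOn 𝔄₂ S₂ μ) :
    ¬ SatUCQOn (fun s => 𝔄₁ s ∪ 𝔄₂ s) (S₁ ∪ S₂) μ := by
  rintro ⟨q, hq, h, hS, hhom⟩
  have h₂₁ : ∀ s t, t ∈ 𝔄₂ s → (∀ i, t i ∈ S₁) → t ∈ 𝔄₁ s := fun s t ht₂ ht =>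
    (hagree s t fun i => ⟨ht i, hsub₂ s t ht₂ i⟩).mpr ht₂
  have h₁₂ : ∀ s t, t ∈ 𝔄₁ s → (∀ i, t i ∈ S₂) → t ∈ 𝔄₂ s := fun s t ht₁ ht =>
    (hagree s t fun i => ⟨hsub₁ s t ht₁ i, ht i⟩).mp ht₁
  rcases (hgaif q hq).forall_mem_or_forall_mem_of_isHom_union hsub₁ hsub₂ hhom hS with
    hS₁ | hS₂
  · exact h₁ ⟨q, hq, h, hS₁, hhom.of_union_of_forall_mem_left h₂₁ hS₁⟩
  · exact h₂ ⟨q, hq, h, hS₂, IsHom.of_union_of_forall_mem_left (𝔄₁ := 𝔄₂) h₁₂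
      (fun s t ht => (hhom s t ht).symm) hS₂⟩

/-- free amalgamation for UCQs with complete Gaifman graphs: if `μ` is
a union of connected conjunctive queries with complete Gaifman graphs, and `A₁`, `A₂` are
finite `τ`-structures satisfying `¬μ` (realized on subsets `S₁`, `S₂` of a common set)
that induce the same substructure on `S₁ ∩ S₂`, then their union satisfies `¬μ`. -/
theorem union_not_sat {τ : Signature} [Finite τ.symbols]
    (μ : List (CQ τ))
    (hconn : ∀ q ∈ μ, Connected q.2)
    (hgaif : ∀ q ∈ μ, GaifmanComplete q.2)
    {X : Type} (S₁ S₂ : Set X) (hfin₁ : S₁.Finite) (hfin₂ : S₂.Finite)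
    (𝔄₁ 𝔄₂ : Struct τ X)
    (hsub₁ : ∀ s : τ.symbols, ∀ t ∈ 𝔄₁ s, ∀ i, t i ∈ S₁)
    (hsub₂ : ∀ s : τ.symbols, ∀ t ∈ 𝔄₂ s, ∀ i, t i ∈ S₂)
    (hagree : ∀ (s : τ.symbols) (t : Fin (τ.arity s) → X),
      (∀ i, t i ∈ S₁ ∩ S₂) → (t ∈ 𝔄₁ s ↔ t ∈ 𝔄₂ s))
    (h₁ : ¬ SatUCQOn 𝔄₁ S₁ μ) (h₂ : ¬ SatUCQOn 𝔄₂ S₂ μ) :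
    ¬ SatUCQOn (fun s => 𝔄₁ s ∪ 𝔄₂ s) (S₁ ∪ S₂) μ :=
  union_not_sat_general μ hgaif S₁ S₂ 𝔄₁ 𝔄₂ hsub₁ hsub₂ hagree h₁ h₂
end

section
/- Let μ be a union of conjunctive queries over a finite relational signature τ, let σ ⊆ τ, and let B be a dual of μ. Let A be a bag database over τ with exogenous relation symbols σ, and let u ∈ ℕ. Then the resilience of A with respect to μ is at most u if and only if there exists a map h from the domain of A to the domain of B such that for every R ∈ σ, every tuple t ∈ R^A satisfies h(t) ∈ R^B, and the sum of the multiplicities of the tuples t ∈ R^A with R ∈ τ∖σ and h(t) ∉ R^B is at most u. -/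
/-!
If removing a set of endogenous tuples leaves a database with no answer to `μ`, duality gives a
map to `𝔅` that is a homomorphism on what remains; every present tuple it fails to preserve was
removed, so the tuples it violates cost at most the removal. Conversely, removing exactly the
endogenous tuples violated by a map that preserves the exogenous ones turns it into a
homomorphism, so by duality the remaining database no longer satisfies `μ`.
-/

section Resilience

variable {τ : Signature} {A B : Type}

def bagRemainder (mult : ∀ s : τ.symbols, (Fin (τ.arity s) → A) → ℕ)
    (rem : ∀ s : τ.symbols, Set (Fin (τ.arity s) → A)) : Struct τ A :=
  fun s => {t | 0 < mult s t ∧ t ∉ rem s}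

noncomputable def removalCost [Fintype τ.symbols] [Fintype A]
    (mult : ∀ s : τ.symbols, (Fin (τ.arity s) → A) → ℕ)
    (rem : ∀ s : τ.symbols, Set (Fin (τ.arity s) → A)) : ℕ :=
  ∑ s : τ.symbols, ∑ t : Fin (τ.arity s) → A, (rem s).indicator (mult s) t

def violatedTuples (σ : Set τ.symbols) (𝔅 : Struct τ B)
    (mult : ∀ s : τ.symbols, (Fin (τ.arity s) → A) → ℕ) (h : A → B) (s : τ.symbols) :
    Set (Fin (τ.arity s) → A) :=
  {t | s ∉ σ ∧ 0 < mult s t ∧ (fun i => h (t i)) ∉ 𝔅 s}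

variable {σ : Set τ.symbols} {𝔅 : Struct τ B} {mult : ∀ s : τ.symbols, (Fin (τ.arity s) → A) → ℕ}
  {rem rem' : ∀ s : τ.symbols, Set (Fin (τ.arity s) → A)} {h : A → B}

theorem removalCost_mono [Fintype τ.symbols] [Fintype A] (hsub : ∀ s, rem s ⊆ rem' s) :
    removalCost mult rem ≤ removalCost mult rem' :=
  Finset.sum_le_sum fun s _ => Finset.sum_le_sum fun _ _ =>
    Set.indicator_le_indicator_of_subset (hsub s) (fun _ => Nat.zero_le _) _

theorem map_mem_of_isHom_bagRemainder (hh : IsHom (bagRemainder mult rem) 𝔅 h) {s : τ.symbols}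
    (hs : rem s = ∅) {t : Fin (τ.arity s) → A} (ht : 0 < mult s t) :
    (fun i => h (t i)) ∈ 𝔅 s :=
  hh s t ⟨ht, by simp [hs]⟩

theorem violatedTuples_subset_of_isHom (hh : IsHom (bagRemainder mult rem) 𝔅 h) (s : τ.symbols) :
    violatedTuples σ 𝔅 mult h s ⊆ rem s := fun t ⟨_, hpos, hviol⟩ => by
  by_contra hnot
  exact hviol (hh s t ⟨hpos, hnot⟩)

theorem isHom_bagRemainder_violatedTuples
    (hσ : ∀ s ∈ σ, ∀ t : Fin (τ.arity s) → A, 0 < mult s t → (fun i => h (t i)) ∈ 𝔅 s) :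
    IsHom (bagRemainder mult (violatedTuples σ 𝔅 mult h)) 𝔅 h := by
  rintro s t ⟨hpos, hnot⟩
  by_cases hs : s ∈ σ
  · exact hσ s hs t hpos
  · by_contra hviol
    exact hnot ⟨hs, hpos, hviol⟩

theorem removalCost_violatedTuples [Fintype τ.symbols] [Fintype A] :
    removalCost mult (violatedTuples σ 𝔅 mult h) =
      ∑ s : τ.symbols,
        Set.indicator {s' : τ.symbols | s' ∉ σ}
          (fun s' => ∑ t : Fin (τ.arity s') → A,
            Set.indicator {t' | 0 < mult s' t' ∧ (fun i => h (t' i)) ∉ 𝔅 s'}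
              (mult s') t) s := by
  refine Finset.sum_congr rfl fun s _ => ?_
  by_cases hs : s ∈ σ <;> simp [violatedTuples, hs]

end Resilience

/-- resilience via duals: let `𝔅` be a dual of the union of conjunctive
queries `μ`, and let a bag database be given by a finite domain `A` and a multiplicity
function `mult` (a tuple is present iff its multiplicity is positive), with exogenous
relation symbols `σ`.  Then the resilience of the database with respect to `μ` is at most
`u` iff there is a map `h : A → B` preserving all present exogenous tuples such that the
total multiplicity of the present endogenous tuples not preserved by `h` is at most `u`. -/
theorem resilience_iff_hom_to_dual {τ : Signature} [Fintype τ.symbols]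
    (σ : Set τ.symbols) (μ : List (CQ τ)) {B : Type} (𝔅 : Struct τ B)
    (hdual : ∀ (A : Type), Finite A → ∀ 𝔄 : Struct τ A,
      (∃ h : A → B, IsHom 𝔄 𝔅 h) ↔ ¬ SatUCQ 𝔄 μ)
    {A : Type} [Fintype A]
    (mult : ∀ s : τ.symbols, (Fin (τ.arity s) → A) → ℕ) (u : ℕ) :
    (∃ rem : ∀ s : τ.symbols, Set (Fin (τ.arity s) → A),
        (∀ s : τ.symbols, ∀ t ∈ rem s, 0 < mult s t) ∧
        (∀ s ∈ σ, rem s = ∅) ∧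
        ¬ SatUCQ (fun s => {t | 0 < mult s t ∧ t ∉ rem s} : Struct τ A) μ ∧
        (∑ s : τ.symbols, ∑ t : Fin (τ.arity s) → A,
            Set.indicator (rem s) (mult s) t) ≤ u) ↔
      ∃ h : A → B,
        (∀ s ∈ σ, ∀ t : Fin (τ.arity s) → A,
          0 < mult s t → (fun i => h (t i)) ∈ 𝔅 s) ∧
        (∑ s : τ.symbols,
            Set.indicator {s' : τ.symbols | s' ∉ σ}
              (fun s' => ∑ t : Fin (τ.arity s') → A,
                Set.indicator {t' | 0 < mult s' t' ∧ (fun i => h (t' i)) ∉ 𝔅 s'}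
                  (mult s') t) s) ≤ u := by
  constructor
  · rintro ⟨rem, -, hσ, hsat, hcost⟩
    obtain ⟨h, hh⟩ := (hdual A inferInstance _).mpr hsat
    refine ⟨h, fun s hs t => map_mem_of_isHom_bagRemainder hh (hσ s hs), ?_⟩
    rw [← removalCost_violatedTuples]
    exact (removalCost_mono (violatedTuples_subset_of_isHom hh)).trans hcost
  · rintro ⟨h, hσh, hcost⟩
    refine ⟨violatedTuples σ 𝔅 mult h, fun s t ht => ht.2.1,
      fun s hs => Set.eq_empty_of_forall_notMem fun t ht => ht.1 hs, ?_, ?_⟩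
    · exact (hdual A inferInstance _).mp ⟨h, isHom_bagRemainder_violatedTuples hσh⟩
    · exact removalCost_violatedTuples.trans_le hcost
end

section
/- Every two-way regular path query has a finite dual. Explicitly: let τ be a finite signature of binary relation symbols and Σ_τ = {R, R⁻ : R ∈ τ}. Then for every regular language L over the alphabet Σ_τ there exists a finite τ-structure B such that for every finite τ-structure A: A has a homomorphism to B if and only if A contains no path whose label belongs to L. -/
/-!
A regular expression has only finitely many left quotients (Brzozowski), so by the
Myhill–Nerode theorem its language is accepted by a DFA `M` with finitely many states.
The dual has as elements the sets of states of `M` that contain the start state and no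
accepting state, with an `R`-edge from `S` to `S'` when reading `R` maps `S` into `S'` and
reading `R⁻` maps `S'` into `S`. A homomorphism into it labels every element by a set of
states that is closed under reading along paths, which rules out an accepted path.
Conversely, if there is no accepted path, labelling every element by the states reached
by reading the paths that end at it is a homomorphism.
-/

/-- A path in a structure (given by binary relations `St R` for `R ∈ τ`) from a source to
a target, with the given label: a word over the alphabet `τ ⊕ τ`, where `Sum.inl R` means
traversing an `R`-edge forwards and `Sum.inr R` means traversing it backwards. -/
inductive HasPath {τ A : Type} (St : τ → A → A → Prop) : A → List (τ ⊕ τ) → A → Prop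
  | nil (a : A) : HasPath St a [] a
  | consFwd {a b c : A} {w : List (τ ⊕ τ)} (R : τ) :
      St R a b → HasPath St b w c → HasPath St a (Sum.inl R :: w) c
  | consBwd {a b c : A} {w : List (τ ⊕ τ)} (R : τ) :
      St R b a → HasPath St b w c → HasPath St a (Sum.inr R :: w) c

open Computability Set

namespace Language

variable {α : Type*}

theorem mem_sSup {𝒮 : Set (Language α)} {x : List α} : x ∈ sSup 𝒮 ↔ ∃ l ∈ 𝒮, x ∈ l :=
  Iff.rfl

theorem finite_range_leftQuotient_of_finite {L : Language α} (hL : Set.Finite (L : Set (List α))) :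
    (range L.leftQuotient).Finite := by
  have hsuffixes : (⋃ w ∈ (L : Set (List α)), {y | y <:+ w}).Finite :=
    hL.biUnion fun w _ => w.tails.finite_toSet.subset fun y hy => (List.mem_tails y w).mpr hy
  refine hsuffixes.finite_subsets.subset ?_
  rintro _ ⟨x, rfl⟩ y hy
  exact mem_biUnion hy (List.suffix_append x y)

theorem leftQuotient_add (L M : Language α) (x : List α) :
    (L + M).leftQuotient x = L.leftQuotient x + M.leftQuotient x :=
  rfl

theorem leftQuotient_mul (L M : Language α) (x : List α) :
    (L * M).leftQuotient x =
      L.leftQuotient x * M + sSup (M.leftQuotient '' {u | ∃ v ∈ L, v ++ u = x}) := by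
  ext y
  simp only [mem_leftQuotient, mem_add, mem_mul, mem_sSup, mem_image, mem_ofPred_eq]
  constructor
  · rintro ⟨v, hv, w, hw, hvw⟩
    rcases List.append_eq_append_iff.mp hvw with ⟨u, rfl, hy⟩ | ⟨u, rfl, rfl⟩
    · exact Or.inr ⟨_, ⟨u, ⟨v, hv, rfl⟩, rfl⟩, by simpa [hy] using hw⟩
    · exact Or.inl ⟨u, by simpa using hv, w, hw, rfl⟩
  · rintro (⟨u, hu, w, hw, rfl⟩ | ⟨_, ⟨u, ⟨v, hv, rfl⟩, rfl⟩, hy⟩)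
    · exact ⟨x ++ u, hu, w, hw, by simp⟩
    · exact ⟨v, hv, u ++ y, hy, by simp⟩

-- In a factorisation of `x ++ y` into words of `L`, the prefix `x` ends inside some factor
-- `u ++ v`; only the empty factorisation escapes this.
theorem append_mem_kstar_iff {L : Language α} {x y : List α} :
    x ++ y ∈ L∗ ↔ x ++ y = [] ∨ ∃ u, (∃ z ∈ L∗, z ++ u = x) ∧ y ∈ L.leftQuotient u * L∗ := by
  constructor
  · rintro ⟨ws, hxy, hws⟩
    induction ws generalizing x with
    | nil => exact Or.inl hxy
    | cons w ws ih =>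
      have hw : w ∈ L := hws w List.mem_cons_self
      have hws' : ∀ w' ∈ ws, w' ∈ L := fun w' h => hws w' (List.mem_cons_of_mem w h)
      rcases List.append_eq_append_iff.mp hxy with ⟨v, rfl, rfl⟩ | ⟨x', rfl, hx'y⟩
      · exact Or.inr ⟨x, ⟨[], nil_mem_kstar L, rfl⟩, mem_mul.mpr ⟨v, hw, _, ⟨ws, rfl, hws'⟩, rfl⟩⟩
      · rcases ih hx'y.symm hws' with hnil | ⟨u, ⟨_, ⟨zs, rfl, hzs⟩, rfl⟩, hy⟩
        · obtain ⟨rfl, rfl⟩ := List.append_eq_nil_iff.mp hnil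
          exact Or.inr ⟨w, ⟨[], nil_mem_kstar L, by simp⟩,
            mem_mul.mpr ⟨[], by simpa using hw, [], nil_mem_kstar L, rfl⟩⟩
        · refine Or.inr ⟨u, ⟨w ++ zs.flatten, ⟨w :: zs, rfl, ?_⟩, by simp⟩, hy⟩
          exact List.forall_mem_cons.mpr ⟨hw, hzs⟩
  · rintro (hnil | ⟨u, ⟨z, hz, rfl⟩, hy⟩)
    · exact hnil ▸ nil_mem_kstar L
    · obtain ⟨v, huv, t, ht, rfl⟩ := mem_mul.mp hy
      have hle : L∗ * (L * L∗) ≤ L∗ :=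
        (mul_le_mul_right mul_kstar_le_kstar _).trans (kstar_mul_kstar L).le
      have hsplit : z ++ u ++ (v ++ t) = z ++ ((u ++ v) ++ t) := by simp
      rw [hsplit]
      exact hle (append_mem_mul hz (append_mem_mul huv ht))

theorem leftQuotient_kstar (L : Language α) (x : List α) :
    L∗.leftQuotient x = (1 : Language α).leftQuotient x +
      sSup ((· * L∗) '' (L.leftQuotient '' {u | ∃ z ∈ L∗, z ++ u = x})) := by
  ext y
  simp only [mem_leftQuotient, mem_add, mem_one, mem_sSup, image_image, mem_image,
    append_mem_kstar_iff, exists_exists_and_eq_and, mem_ofPred_eq]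

theorem finite_range_leftQuotient_add {L M : Language α} (hL : (range L.leftQuotient).Finite)
    (hM : (range M.leftQuotient).Finite) : (range (L + M).leftQuotient).Finite :=
  (hL.image2 (· + ·) hM).subset <| by
    rintro _ ⟨x, rfl⟩
    exact ⟨_, mem_range_self x, _, mem_range_self x, (leftQuotient_add L M x).symm⟩

theorem finite_range_leftQuotient_mul {L M : Language α} (hL : (range L.leftQuotient).Finite)
    (hM : (range M.leftQuotient).Finite) : (range (L * M).leftQuotient).Finite :=
  (hL.image2 (fun A 𝒮 => A * M + sSup 𝒮) hM.finite_subsets).subset <| by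
    rintro _ ⟨x, rfl⟩
    exact ⟨_, mem_range_self x, _, image_subset_range _ _, (leftQuotient_mul L M x).symm⟩

theorem finite_range_leftQuotient_kstar {L : Language α} (hL : (range L.leftQuotient).Finite) :
    (range L∗.leftQuotient).Finite :=
  ((finite_range_leftQuotient_of_finite (finite_singleton [])).image2
    (fun A 𝒮 => A + sSup ((· * L∗) '' 𝒮)) hL.finite_subsets).subset <| by
    rintro _ ⟨x, rfl⟩
    exact ⟨_, mem_range_self x, _, image_subset_range _ _, (leftQuotient_kstar L x).symm⟩

end Language

namespace RegularExpression

variable {α : Type*}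

theorem finite_range_leftQuotient_matches' (P : RegularExpression α) :
    (range P.matches'.leftQuotient).Finite := by
  induction P with
  | zero => exact Language.finite_range_leftQuotient_of_finite finite_empty
  | epsilon => exact Language.finite_range_leftQuotient_of_finite (finite_singleton [])
  | char a => exact Language.finite_range_leftQuotient_of_finite (finite_singleton [a])
  | plus P Q hP hQ => exact Language.finite_range_leftQuotient_add hP hQ
  | comp P Q hP hQ => exact Language.finite_range_leftQuotient_mul hP hQ
  | star P hP => exact Language.finite_range_leftQuotient_kstar hP

theorem isRegular_matches' (P : RegularExpression α) : P.matches'.IsRegular :=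
  .of_finite_range_leftQuotient P.finite_range_leftQuotient_matches'

end RegularExpression

theorem HasPath.append {τ A : Type} {St : τ → A → A → Prop} {a b c : A} {u v : List (τ ⊕ τ)}
    (huv : HasPath St a u b) (hv : HasPath St b v c) : HasPath St a (u ++ v) c := by
  induction huv with
  | nil => exact hv
  | consFwd R hab _ ih => exact .consFwd R hab (ih hv)
  | consBwd R hba _ ih => exact .consBwd R hba (ih hv)

namespace DFA

variable {τ : Type} {σ : Type*} (M : DFA (τ ⊕ τ) σ)

def Dual : Type _ := {S : Set σ // M.start ∈ S ∧ Disjoint S M.accept}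

instance [Finite σ] : Finite M.Dual := Subtype.finite

def dualRel (R : τ) (S S' : M.Dual) : Prop :=
  (∀ q ∈ S.1, M.step q (.inl R) ∈ S'.1) ∧ ∀ q ∈ S'.1, M.step q (.inr R) ∈ S.1

variable {M} {A : Type}

theorem evalFrom_mem_of_hasPath {𝔄 : τ → A → A → Prop} {h : A → M.Dual}
    (hh : ∀ R a a', 𝔄 R a a' → M.dualRel R (h a) (h a')) {a c : A} {w : List (τ ⊕ τ)}
    (hp : HasPath 𝔄 a w c) {q : σ} (hq : q ∈ (h a).1) : M.evalFrom q w ∈ (h c).1 := by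
  induction hp generalizing q with
  | nil => exact hq
  | consFwd R hab _ ih => exact ih ((hh R _ _ hab).1 q hq)
  | consBwd R hba _ ih => exact ih ((hh R _ _ hba).2 q hq)

def reachedStates (𝔄 : τ → A → A → Prop) (a : A) : Set σ :=
  {q | ∃ x w, HasPath 𝔄 x w a ∧ M.eval w = q}

theorem exists_hom_dual_iff (𝔄 : τ → A → A → Prop) :
    (∃ h : A → M.Dual, ∀ R a a', 𝔄 R a a' → M.dualRel R (h a) (h a')) ↔
      ¬ ∃ (a c : A) (w : List (τ ⊕ τ)), w ∈ M.accepts ∧ HasPath 𝔄 a w c := by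
  constructor
  · rintro ⟨h, hh⟩ ⟨a, c, w, hw, hp⟩
    exact (h c).2.2.notMem_of_mem_left (evalFrom_mem_of_hasPath hh hp (h a).2.1) hw
  · intro hno
    refine ⟨fun a => ⟨M.reachedStates 𝔄 a, ⟨a, [], .nil a, rfl⟩, ?_⟩, fun R a a' hR => ⟨?_, ?_⟩⟩
    · refine disjoint_left.mpr ?_
      rintro _ ⟨x, w, hp, rfl⟩ hacc
      exact hno ⟨x, a, w, hacc, hp⟩
    · rintro _ ⟨x, w, hp, rfl⟩
      exact ⟨x, w ++ [.inl R], hp.append (.consFwd R hR (.nil a')), M.eval_append_singleton w _⟩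
    · rintro _ ⟨x, w, hp, rfl⟩
      exact ⟨x, w ++ [.inr R], hp.append (.consBwd R hR (.nil a)), M.eval_append_singleton w _⟩

end DFA

theorem twoWayRPQ_has_finite_dual_general {τ : Type}
    (μ : RegularExpression (τ ⊕ τ)) :
    ∃ (B : Type) (_ : Finite B) (𝔅 : τ → B → B → Prop),
      ∀ (A : Type), Finite A → ∀ 𝔄 : τ → A → A → Prop,
        (∃ h : A → B, ∀ (R : τ) (a a' : A), 𝔄 R a a' → 𝔅 R (h a) (h a')) ↔
          ¬ ∃ (a c : A) (w : List (τ ⊕ τ)), w ∈ μ.matches' ∧ HasPath 𝔄 a w c := by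
  obtain ⟨σ, _, M, hM⟩ := μ.isRegular_matches'
  refine ⟨M.Dual, inferInstance, M.dualRel, fun A _ 𝔄 => ?_⟩
  rw [← hM]
  exact M.exists_hom_dual_iff 𝔄

/-- every two-way regular path query has a finite dual.  For a finite
signature `τ` of binary relation symbols and a regular expression `μ` over the alphabet
`Σ_τ = τ ⊕ τ`, there is a finite `τ`-structure `𝔅` such that a finite `τ`-structure `𝔄`
has a homomorphism to `𝔅` if and only if `𝔄` contains no path whose label belongs to the
language of `μ`. -/
theorem twoWayRPQ_has_finite_dual {τ : Type} [Finite τ]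
    (μ : RegularExpression (τ ⊕ τ)) :
    ∃ (B : Type) (_ : Finite B) (𝔅 : τ → B → B → Prop),
      ∀ (A : Type), Finite A → ∀ 𝔄 : τ → A → A → Prop,
        (∃ h : A → B, ∀ (R : τ) (a a' : A), 𝔄 R a a' → 𝔅 R (h a) (h a')) ↔
          ¬ ∃ (a c : A) (w : List (τ ⊕ τ)), w ∈ μ.matches' ∧ HasPath 𝔄 a w c :=
  twoWayRPQ_has_finite_dual_general μ
end
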